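/- Let P ⊂ 𝔾ⁿ be the solution set of a system A x ⊕ c ≤𝔾 B x ⊕ d with A ∈ ℝmax^{p×n}, B ∈ 𝔾^{p×n}, c ∈ ℝmax^p, d ∈ 𝔾^p, where in each row i and column j at most one of A_{ij}, B_{ij} is different from -∞, and let Q ⊂ 𝔾^{n-1} be the set defined by the Fourier-Motzkin inequalities: (⊕_{j≠n} A_{ij} xⱼ) ⊕ cᵢ ≤𝔾 (⊕_{j≠n} B_{ij} xⱼ) ⊕ dᵢ for all i ∈ [p] with B_{in} = -∞, and (⊕_{j≠n} A_{ij} xⱼ) ⊕ cᵢ ≤𝔾 (⊕_{j≠n} (B_{ij} ⊕ B_{in} A_{kn}⁻¹ B_{kj}) xⱼ) ⊕ dᵢ ⊕ B_{in} A_{kn}⁻¹ d_k for all i, k ∈ [p] with B_{in} ≠ -∞ and A_{kn} ≠ -∞ (A_{kn}⁻¹ = -A_{kn} ∈ ℝ). Then for all x ∈ ℝmax^{n-1}, x ∈ Q if, and only if, there exists λ ∈ ℝmax such that (x, λ) ∈ P. -/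

import Mathlib

attribute [local instance] Classical.propDecidable

/-- The germ semiring `𝔾 = ℝmax ∪ {+∞} ∪ ℝ⁻`: `negInf` is `-∞`, `fin a` is the
real number `a` (an element of `ℝmax`), `germ a` is the germ `a̲ ∈ ℝ⁻`, and
`posInf` is `+∞`. -/
inductive TGerm where
  | negInf : TGerm
  | fin : ℝ → TGerm
  | germ : ℝ → TGerm
  | posInf : TGerm

namespace TGerm

/-- The modulus `|x| ∈ ℝmax ∪ {+∞} = EReal` of an element of `𝔾`. -/
noncomputable def modulus : TGerm → EReal
  | negInf => ⊥
  | fin a => (a : EReal)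
  | germ a => (a : EReal)
  | posInf => ⊤

/-- Whether `x` belongs to the copy `ℝ⁻` of perturbed reals. -/
def isPert : TGerm → Bool
  | germ _ => true
  | _ => false

/-- The total order `≤𝔾` on `𝔾`: `x ≤𝔾 y` iff `|x| < |y|` when
`x ∈ ℝmax ∪ {+∞}` and `y ∈ ℝ⁻`, and `|x| ≤ |y|` otherwise. -/
def gle (x y : TGerm) : Prop :=
  if isPert x = false ∧ isPert y = true then modulus x < modulus y
  else modulus x ≤ modulus y

/-- The valuation `x(ε) ∈ ℝmax ∪ {+∞} = EReal` of `x ∈ 𝔾` at `ε`. -/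
noncomputable def val : TGerm → ℝ → EReal
  | negInf, _ => ⊥
  | fin a, _ => (a : EReal)
  | germ a, ε => ((a - ε : ℝ) : EReal)
  | posInf, _ => ⊤

/-- The addition `⊕` of `𝔾`: the maximum with respect to `≤𝔾`. -/
noncomputable def add (x y : TGerm) : TGerm := if gle x y then y else x

/-- The minimum with respect to `≤𝔾`. -/
noncomputable def gmin (x y : TGerm) : TGerm := if gle x y then x else y

/-- The tropical sum `⊕ᵢ f i` of a finite family in `𝔾`. -/
noncomputable def gsum {n : ℕ} (f : Fin n → TGerm) : TGerm :=
  (List.ofFn f).foldr add negInf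

/-- The minimum (w.r.t. `≤𝔾`) of a finite family in `𝔾`. -/
noncomputable def ginf {n : ℕ} (f : Fin n → TGerm) : TGerm :=
  (List.ofFn f).foldr gmin posInf

/-- The multiplication `⊗` of `𝔾`. -/
def mul : TGerm → TGerm → TGerm
  | negInf, _ => negInf
  | _, negInf => negInf
  | posInf, _ => posInf
  | _, posInf => posInf
  | fin a, fin b => fin (a + b)
  | fin a, germ b => germ (a + b)
  | germ a, fin b => germ (a + b)
  | germ a, germ b => germ (a + b)

end TGerm

/-- The embedding of `ℝmax = ℝ ∪ {-∞}` into the germ semiring `𝔾`. -/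
def toGerm (x : WithBot ℝ) : TGerm := WithBot.recBotCoe TGerm.negInf TGerm.fin x

/-- The embedding of `ℝmax = ℝ ∪ {-∞}` into `ℝmax ∪ {+∞} = EReal`. -/
noncomputable def rmaxToEReal (x : WithBot ℝ) : EReal :=
  WithBot.recBotCoe ⊥ (fun a : ℝ => (a : EReal)) x

/-- For `x ∈ ℝmax`, the germ `x⁻¹ = -x ∈ ℝ ⊆ 𝔾` when `x` is a real number
(the value at `⊥` is irrelevant: it is only used under the guard `x ≠ -∞`). -/
def negOf (x : WithBot ℝ) : TGerm :=
  WithBot.recBotCoe TGerm.negInf (fun a : ℝ => TGerm.fin (-a)) x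

/-!
Split off the last variable `λ`: row `i` of `P` reads `Lᵢ ⊕ αᵢ λ ≤ Rᵢ ⊕ βᵢ λ` with `Lᵢ ∈ ℝmax`, and
by disjointness either `βᵢ = -∞`, so the row bounds `λ` above by `αᵢ⁻¹ Rᵢ`, or `αᵢ = -∞`, so the row
is monotone in `λ`. The Fourier–Motzkin inequalities say exactly that the monotone rows hold at
`U = min_k αₖ⁻¹ Rₖ ∈ 𝔾`. `U` itself may be a germ or `+∞`, but since `Lᵢ ∈ ℝmax`, an inequality
`Lᵢ ≤ βᵢ U` persists for all `λ ∈ ℝmax` close enough below `U` (eventually along `atTop` in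
`{λ ∈ ℝmax | λ ≤ U}`), and finitely many rows can be met at once.
-/

namespace TGerm

/-- `≤𝔾` is the lexicographic order on `(|x|, x ∉ ℝ⁻)`: the germ `a̲` sits just below `a`. -/
noncomputable def orderKey (x : TGerm) : Lex (EReal × Bool) := toLex (x.modulus, !x.isPert)

lemma orderKey_injective : Function.Injective orderKey := by
  intro x y h
  simp only [orderKey, toLex.injective.eq_iff, Prod.mk.injEq] at h
  cases x <;> cases y <;> simp_all [modulus, isPert]

noncomputable instance : LinearOrder TGerm := LinearOrder.lift' orderKey orderKey_injective

lemma gle_iff_le {x y : TGerm} : gle x y ↔ x ≤ y := by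
  change _ ↔ orderKey x ≤ orderKey y
  rw [orderKey, orderKey, Prod.Lex.le_iff]
  cases x <;> cases y <;> simp [gle, modulus, isPert, le_iff_lt_or_eq]

lemma negInf_le (x : TGerm) : negInf ≤ x := by
  rw [← gle_iff_le]; cases x <;> simp [gle, modulus, isPert]

lemma le_posInf (x : TGerm) : x ≤ posInf := by
  rw [← gle_iff_le]; cases x <;> simp [gle, modulus, isPert]

lemma fin_le_fin {a b : ℝ} : fin a ≤ fin b ↔ a ≤ b := by
  rw [← gle_iff_le]; simp [gle, modulus, isPert]

lemma fin_le_germ {a b : ℝ} : fin a ≤ germ b ↔ a < b := by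
  rw [← gle_iff_le]; simp [gle, modulus, isPert]

instance : Zero TGerm := ⟨negInf⟩

instance : One TGerm := ⟨fin 0⟩

noncomputable instance : Add TGerm := ⟨add⟩

instance : Mul TGerm := ⟨mul⟩

lemma zero_def : (0 : TGerm) = negInf := rfl

lemma add_def (x y : TGerm) : x + y = x.add y := rfl

lemma mul_def (x y : TGerm) : x * y = x.mul y := rfl

lemma add_eq_max (x y : TGerm) : x + y = max x y := by
  simp [add_def, add, max_def, gle_iff_le]

instance : MulLeftMono TGerm := by
  refine ⟨fun z x y h => ?_⟩
  rw [← gle_iff_le] at h ⊢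
  cases z <;> cases x <;> cases y <;> simp_all [mul_def, mul, gle, modulus, isPert] <;>
    (norm_cast; linarith)

protected lemma mul_comm (x y : TGerm) : x * y = y * x := by
  cases x <;> cases y <;> simp [mul_def, mul, add_comm]

noncomputable instance : CommSemiring TGerm where
  add_assoc x y z := by simp only [add_eq_max, max_assoc]
  zero_add x := (add_eq_max 0 x).trans (max_eq_right (negInf_le x))
  add_zero x := (add_eq_max x 0).trans (max_eq_left (negInf_le x))
  add_comm x y := by simp only [add_eq_max, max_comm]
  nsmul := nsmulRec
  nsmul_zero _ := rfl
  nsmul_succ _ _ := rfl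
  mul_assoc x y z := by cases x <;> cases y <;> cases z <;> simp [mul_def, mul, add_assoc]
  one_mul x := by cases x <;> simp [mul_def, mul]
  mul_one x := by cases x <;> simp [mul_def, mul]
  zero_mul x := rfl
  mul_zero x := by cases x <;> rfl
  mul_comm := TGerm.mul_comm
  left_distrib x y z := by
    simp only [add_eq_max]
    exact Monotone.map_max fun _ _ h => mul_le_mul_right h x
  right_distrib x y z := by
    simp only [add_eq_max, TGerm.mul_comm _ z]
    exact Monotone.map_max fun _ _ h => mul_le_mul_right h z

instance : IsBotZeroClass TGerm := ⟨negInf_le⟩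

instance : OrderTop TGerm where
  top := posInf
  le_top := le_posInf

lemma mul_top {x : TGerm} (hx : x ≠ 0) : x * ⊤ = ⊤ := by
  cases x
  · exact absurd rfl hx
  all_goals rfl

lemma gsum_eq_sum {n : ℕ} (f : Fin n → TGerm) : gsum f = ∑ j, f j := by
  rw [← Fin.sum_ofFn]; rfl

end TGerm

open TGerm

@[simp] lemma toGerm_bot : toGerm ⊥ = 0 := rfl

lemma toGerm_mono : Monotone toGerm := by
  intro a b hab
  induction a using WithBot.recBotCoe with
  | bot => exact zero_le
  | coe a =>
    induction b using WithBot.recBotCoe with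
    | bot => exact absurd hab (WithBot.not_coe_le_bot a)
    | coe b => exact fin_le_fin.2 (WithBot.coe_le_coe.1 hab)

lemma toGerm_add (a b : WithBot ℝ) : toGerm (a + b) = toGerm a * toGerm b := by
  induction a using WithBot.recBotCoe <;> induction b using WithBot.recBotCoe <;> rfl

lemma toGerm_mul_negOf {a : WithBot ℝ} (ha : a ≠ ⊥) : toGerm a * negOf a = 1 := by
  obtain ⟨r, rfl⟩ := WithBot.ne_bot_iff_exists.1 ha
  change fin (r + -r) = fin 0
  rw [add_neg_cancel]

lemma toGerm_mul_le_iff {a : WithBot ℝ} (ha : a ≠ ⊥) {y z : TGerm} :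
    toGerm a * z ≤ y ↔ z ≤ negOf a * y := by
  constructor
  · intro h
    calc z = negOf a * (toGerm a * z) := by
          rw [← mul_assoc, mul_comm (negOf a), toGerm_mul_negOf ha, one_mul]
      _ ≤ negOf a * y := mul_le_mul_right h _
  · intro h
    calc toGerm a * z ≤ toGerm a * (negOf a * y) := mul_le_mul_right h _
      _ = y := by rw [← mul_assoc, toGerm_mul_negOf ha, one_mul]

def rmax : Subsemiring TGerm where
  carrier := Set.range toGerm
  mul_mem' := by
    rintro _ _ ⟨a, rfl⟩ ⟨b, rfl⟩
    exact ⟨a + b, toGerm_add a b⟩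
  one_mem' := ⟨0, rfl⟩
  add_mem' := by
    rintro _ _ ⟨a, rfl⟩ ⟨b, rfl⟩
    exact ⟨max a b, by rw [add_eq_max, toGerm_mono.map_max]⟩
  zero_mem' := ⟨⊥, rfl⟩

lemma exists_toGerm_le_and_le_mul {l : WithBot ℝ} {β U : TGerm} (h : toGerm l ≤ β * U) :
    ∃ lam : WithBot ℝ, toGerm lam ≤ U ∧ toGerm l ≤ β * toGerm lam := by
  induction l using WithBot.recBotCoe with
  | bot => exact ⟨⊥, zero_le, zero_le⟩
  | coe r =>
    change fin r ≤ β * U at h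
    have not_le_zero : ¬ fin r ≤ 0 := by simp [zero_def, ← gle_iff_le, gle, modulus, isPert]
    cases U with
    | negInf => exact ⟨⊥, le_rfl, h⟩
    | fin w => exact ⟨w, le_rfl, h⟩
    | germ w =>
      cases β with
      | negInf => exact absurd h not_le_zero
      | fin b =>
        have hr : r < b + w := fin_le_germ.1 h
        exact ⟨((w + r - b) / 2 : ℝ), fin_le_germ.2 (by linarith), fin_le_fin.2 (by linarith)⟩
      | germ b =>
        have hr : r < b + w := fin_le_germ.1 h
        exact ⟨((w + r - b) / 2 : ℝ), fin_le_germ.2 (by linarith), fin_le_germ.2 (by linarith)⟩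
      | posInf => exact ⟨(w - 1 : ℝ), fin_le_germ.2 (by linarith), le_posInf _⟩
    | posInf =>
      cases β with
      | negInf => exact absurd h not_le_zero
      | fin b => exact ⟨(r - b : ℝ), le_posInf _, fin_le_fin.2 (by linarith)⟩
      | germ b => exact ⟨(r - b + 1 : ℝ), le_posInf _, fin_le_germ.2 (by linarith)⟩
      | posInf => exact ⟨0, le_posInf _, le_posInf _⟩

instance (U : TGerm) : Nonempty {lam : WithBot ℝ // toGerm lam ≤ U} := ⟨⟨⊥, zero_le⟩⟩

lemma eventually_le_add_mul {l : WithBot ℝ} {R β U : TGerm} (h : toGerm l ≤ R + β * U) :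
    ∀ᶠ lam : {lam : WithBot ℝ // toGerm lam ≤ U} in Filter.atTop,
      toGerm l ≤ R + β * toGerm lam := by
  simp only [add_eq_max] at h ⊢
  rcases le_max_iff.1 h with hR | hβ
  · exact Filter.Eventually.of_forall fun _ => le_max_of_le_left hR
  · obtain ⟨lam₀, hlam₀U, hlam₀⟩ := exists_toGerm_le_and_le_mul hβ
    refine Filter.eventually_atTop.2 ⟨⟨lam₀, hlam₀U⟩, fun lam hlam => le_max_of_le_right ?_⟩
    exact hlam₀.trans (mul_le_mul_right (toGerm_mono hlam) β)

section FourierMotzkin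

variable {ι : Type*} {L R β : ι → TGerm} {α : ι → WithBot ℝ}

theorem exists_solution_of_fourierMotzkin [Fintype ι] (hL : ∀ i, L i ∈ rmax)
    (hdisj : ∀ i, α i = ⊥ ∨ β i = 0) (hzero : ∀ i, β i = 0 → L i ≤ R i)
    (hpair : ∀ i k, β i ≠ 0 → α k ≠ ⊥ → L i ≤ R i + β i * (negOf (α k) * R k)) :
    ∃ lam : WithBot ℝ, ∀ i, L i + toGerm (α i) * toGerm lam ≤ R i + β i * toGerm lam := by
  set U := {k | α k ≠ ⊥}.toFinset.inf fun k => negOf (α k) * R k with hU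
  have hU_le : ∀ k, α k ≠ ⊥ → U ≤ negOf (α k) * R k := fun k hk =>
    Finset.inf_le (Set.mem_toFinset.2 hk)
  have hL_le : ∀ i, β i ≠ 0 → L i ≤ R i + β i * U := by
    intro i hi
    rcases {k | α k ≠ ⊥}.toFinset.eq_empty_or_nonempty with hempty | hne
    · rw [hU, hempty, Finset.inf_empty, mul_top hi, add_eq_max]
      exact le_max_of_le_right le_top
    · obtain ⟨k, hk, hUk⟩ := Finset.exists_mem_eq_inf _ hne fun k => negOf (α k) * R k
      rw [hU, hUk]
      exact hpair i k hi (Set.mem_toFinset.1 hk)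
  have hevent : ∀ᶠ lam : {lam : WithBot ℝ // toGerm lam ≤ U} in Filter.atTop,
      ∀ i, β i ≠ 0 → L i ≤ R i + β i * toGerm lam :=
    Filter.eventually_all.2 fun i => Filter.eventually_imp_distrib_left.2 fun hi => by
      obtain ⟨l, hl⟩ := hL i
      rw [← hl]
      exact eventually_le_add_mul (hl ▸ hL_le i hi)
  obtain ⟨⟨lam, hlam_U⟩, hlam⟩ := hevent.exists
  refine ⟨lam, fun i => ?_⟩
  by_cases hi : β i = 0
  · rw [hi, zero_mul, add_zero, add_eq_max]
    refine max_le (hzero i hi) ?_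
    by_cases hα : α i = ⊥
    · rw [hα, toGerm_bot, zero_mul]
      exact zero_le
    · exact (toGerm_mul_le_iff hα).2 (hlam_U.trans (hU_le i hα))
  · rw [(hdisj i).resolve_right hi, toGerm_bot, zero_mul, add_zero]
    exact hlam i hi

theorem fourierMotzkin_of_solution (hdisj : ∀ i, α i = ⊥ ∨ β i = 0) {lam : WithBot ℝ}
    (hlam : ∀ i, L i + toGerm (α i) * toGerm lam ≤ R i + β i * toGerm lam) :
    (∀ i, β i = 0 → L i ≤ R i) ∧
      ∀ i k, β i ≠ 0 → α k ≠ ⊥ → L i ≤ R i + β i * (negOf (α k) * R k) := by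
  have hrow_zero : ∀ i, β i = 0 → L i ≤ R i ∧ toGerm (α i) * toGerm lam ≤ R i := fun i hi => by
    simpa [hi, add_eq_max] using hlam i
  refine ⟨fun i hi => (hrow_zero i hi).1, fun i k hi hk => ?_⟩
  have hlam_le : toGerm lam ≤ negOf (α k) * R k :=
    (toGerm_mul_le_iff hk).1 (hrow_zero k ((hdisj k).resolve_left hk)).2
  calc L i ≤ R i + β i * toGerm lam := by simpa [(hdisj i).resolve_right hi] using hlam i
    _ ≤ R i + β i * (negOf (α k) * R k) := by
      simp only [add_eq_max]
      exact max_le_max le_rfl (mul_le_mul_right hlam_le _)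

theorem fourierMotzkin_iff_exists_solution [Fintype ι] (hL : ∀ i, L i ∈ rmax)
    (hdisj : ∀ i, α i = ⊥ ∨ β i = 0) :
    ((∀ i, β i = 0 → L i ≤ R i) ∧
      ∀ i k, β i ≠ 0 → α k ≠ ⊥ → L i ≤ R i + β i * (negOf (α k) * R k)) ↔
    ∃ lam : WithBot ℝ, ∀ i, L i + toGerm (α i) * toGerm lam ≤ R i + β i * toGerm lam :=
  ⟨fun h => exists_solution_of_fourierMotzkin hL hdisj h.1 h.2,
    fun ⟨_, hlam⟩ => fourierMotzkin_of_solution hdisj hlam⟩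

end FourierMotzkin

theorem statement_9 (n p : ℕ)
    (A : Fin p → Fin (n + 1) → WithBot ℝ) (B : Fin p → Fin (n + 1) → TGerm)
    (c : Fin p → WithBot ℝ) (d : Fin p → TGerm)
    (hdisj : ∀ i j, A i j = ⊥ ∨ B i j = TGerm.negInf)
    (x : Fin n → WithBot ℝ) :
    ((∀ i, B i (Fin.last n) = TGerm.negInf →
        (TGerm.add (TGerm.gsum fun j => (toGerm (A i (Fin.castSucc j))).mul (toGerm (x j)))
            (toGerm (c i))).gle
          (TGerm.add (TGerm.gsum fun j => (B i (Fin.castSucc j)).mul (toGerm (x j))) (d i))) ∧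
      (∀ i k, B i (Fin.last n) ≠ TGerm.negInf → A k (Fin.last n) ≠ ⊥ →
        (TGerm.add (TGerm.gsum fun j => (toGerm (A i (Fin.castSucc j))).mul (toGerm (x j)))
            (toGerm (c i))).gle
          (TGerm.add
            (TGerm.add
              (TGerm.gsum fun j =>
                ((B i (Fin.castSucc j)).add
                    ((B i (Fin.last n)).mul
                      ((negOf (A k (Fin.last n))).mul (B k (Fin.castSucc j))))).mul
                  (toGerm (x j)))
              (d i))
            ((B i (Fin.last n)).mul ((negOf (A k (Fin.last n))).mul (d k))))))
    ↔ ∃ lam : WithBot ℝ, ∀ i,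
        (TGerm.add
            (TGerm.gsum fun j =>
              (toGerm (A i j)).mul (toGerm ((Fin.snoc x lam : Fin (n + 1) → WithBot ℝ) j)))
            (toGerm (c i))).gle
          (TGerm.add
            (TGerm.gsum fun j =>
              (B i j).mul (toGerm ((Fin.snoc x lam : Fin (n + 1) → WithBot ℝ) j)))
            (d i)) := by
  have hL : ∀ i, (∑ j : Fin n, toGerm (A i j.castSucc) * toGerm (x j) + toGerm (c i)) ∈ rmax :=
    fun i => add_mem (sum_mem fun j _ => mul_mem ⟨_, rfl⟩ ⟨_, rfl⟩) ⟨_, rfl⟩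
  have hpair_rhs : ∀ i k,
      ∑ j : Fin n, (B i j.castSucc + B i (Fin.last n) * (negOf (A k (Fin.last n)) * B k j.castSucc)) *
          toGerm (x j) + d i + B i (Fin.last n) * (negOf (A k (Fin.last n)) * d k) =
        (∑ j : Fin n, B i j.castSucc * toGerm (x j) + d i) + B i (Fin.last n) *
          (negOf (A k (Fin.last n)) * (∑ j : Fin n, B k j.castSucc * toGerm (x j) + d k)) := by
    intro i k
    simp only [add_mul, mul_add, Finset.sum_add_distrib, Finset.mul_sum, mul_assoc]
    abel
  simp only [gle_iff_le, ← add_def, ← mul_def, gsum_eq_sum, ← zero_def, hpair_rhs]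
  refine (fourierMotzkin_iff_exists_solution
    (R := fun i => ∑ j : Fin n, B i j.castSucc * toGerm (x j) + d i) hL
    fun i => hdisj i (Fin.last n)).trans (exists_congr fun lam => forall_congr' fun i => ?_)
  simp only [Fin.sum_univ_castSucc, Fin.snoc_castSucc, Fin.snoc_last]
  rw [add_right_comm _ _ (toGerm (c i)), add_right_comm _ _ (d i)]
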